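/- Suppose h(x, Ty) = n h(x, y) for all x, y ∈ W (the fiberwise form of the condition ∇N = 0 for a pointwise k-slant submanifold of a Kähler manifold). Then h(x, y) = 0 for every x ∈ D₀, y ∈ Dᵢ, and i ∈ {1,…,k}; that is, the submanifold is (D₀, Dᵢ)-mixed totally geodesic (Theorem 3.6 (i), fiberwise form). -/

import Mathlib

/-!
On `D₀` the tangential part `T` of `J` is `J` itself, so `T² = -1` there, while on a slant
distribution `Dᵢ` the skew map `T` scales norms by `cos θᵢ`, whence `T² = -cos² θᵢ`.
Applying `h(x, Ty) = n h(x, y)` twice in each slot therefore gives both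
`n² h(x, y) = -h(x, y)` and `n² h(x, y) = -cos² θᵢ · h(x, y)`, and `cos² θᵢ ≠ 1`.
-/

open scoped RealInnerProductSpace

section Tangential

variable {V : Type*} [NormedAddCommGroup V] [InnerProductSpace ℝ V]

lemma inner_map_eq_neg_inner_map (J : V →ₗ[ℝ] V) (hJinner : ∀ x y : V, ⟪J x, J y⟫ = ⟪x, y⟫)
    (hJsq : ∀ x : V, J (J x) = -x) (a b : V) : ⟪J a, b⟫ = -⟪a, J b⟫ := by
  have h := hJinner a (J b)
  rw [hJsq, inner_neg_right] at h
  linarith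

variable {W : Submodule ℝ V} {J T N : V →ₗ[ℝ] V}

lemma inner_tangential_eq_inner (hN : ∀ x ∈ W, N x ∈ Wᗮ) (hTN : ∀ x ∈ W, J x = T x + N x)
    {a b : V} (ha : a ∈ W) (hb : b ∈ W) : ⟪T a, b⟫ = ⟪J a, b⟫ := by
  rw [hTN a ha, inner_add_left, Submodule.inner_left_of_mem_orthogonal hb (hN a ha), add_zero]

lemma inner_tangential_eq_neg_inner_tangential (hN : ∀ x ∈ W, N x ∈ Wᗮ)
    (hTN : ∀ x ∈ W, J x = T x + N x) (hJinner : ∀ x y : V, ⟪J x, J y⟫ = ⟪x, y⟫)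
    (hJsq : ∀ x : V, J (J x) = -x) {a b : V} (ha : a ∈ W) (hb : b ∈ W) :
    ⟪T a, b⟫ = -⟪a, T b⟫ := by
  rw [inner_tangential_eq_inner hN hTN ha hb, ← real_inner_comm a (T b),
    inner_tangential_eq_inner hN hTN hb ha, real_inner_comm a (J b)]
  exact inner_map_eq_neg_inner_map J hJinner hJsq a b

lemma tangential_eq_of_map_mem (hN : ∀ x ∈ W, N x ∈ Wᗮ) (hTN : ∀ x ∈ W, J x = T x + N x)
    (hT : ∀ x ∈ W, T x ∈ W) {z : V} (hz : z ∈ W) (hJz : J z ∈ W) :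
    T z = J z := by
  have hNW : N z ∈ W := by
    rw [show N z = J z - T z by rw [hTN z hz]; abel]
    exact W.sub_mem hJz (hT z hz)
  have hN0 : N z = 0 :=
    inner_self_eq_zero.mp (Submodule.inner_right_of_mem_orthogonal hNW (hN z hz))
  rw [hTN z hz, hN0, add_zero]

end Tangential

section Slant

variable {V : Type*} [NormedAddCommGroup V] [InnerProductSpace ℝ V]
  {D : Submodule ℝ V} {T : V →ₗ[ℝ] V} {r : ℝ}

lemma inner_apply_apply_eq_sq_mul_inner (hnorm : ∀ x ∈ D, ‖T x‖ = r * ‖x‖) {u w : V}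
    (hu : u ∈ D) (hw : w ∈ D) : ⟪T u, T w⟫ = r ^ 2 * ⟪u, w⟫ := by
  rw [real_inner_eq_norm_add_mul_self_sub_norm_mul_self_sub_norm_mul_self_div_two,
    real_inner_eq_norm_add_mul_self_sub_norm_mul_self_sub_norm_mul_self_div_two u w,
    ← map_add, hnorm _ (D.add_mem hu hw), hnorm u hu, hnorm w hw]
  ring

lemma apply_apply_eq_neg_sq_smul (hTD : ∀ x ∈ D, T x ∈ D)
    (hskew : ∀ a ∈ D, ∀ b ∈ D, ⟪T a, b⟫ = -⟪a, T b⟫) (hnorm : ∀ x ∈ D, ‖T x‖ = r * ‖x‖)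
    {z : V} (hz : z ∈ D) : T (T z) = -(r ^ 2 • z) := by
  have hmem : T (T z) + r ^ 2 • z ∈ D := D.add_mem (hTD _ (hTD z hz)) (D.smul_mem _ hz)
  have hperp : ∀ u ∈ D, ⟪T (T z) + r ^ 2 • z, u⟫ = 0 := by
    intro u hu
    rw [inner_add_left, real_inner_smul_left, hskew _ (hTD z hz) u hu,
      inner_apply_apply_eq_sq_mul_inner hnorm hz hu]
    ring
  exact eq_neg_of_add_eq_zero_left (inner_self_eq_zero.mp (hperp _ hmem))

end Slant

lemma n_n_h_eq_neg_smul_of_T_T_eq_neg_smul {V : Type*} [AddCommGroup V] [Module ℝ V]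
    {W : Submodule ℝ V} {T n : V →ₗ[ℝ] V} {h : V →ₗ[ℝ] V →ₗ[ℝ] V}
    (hnab : ∀ x ∈ W, ∀ y ∈ W, h x (T y) = n (h x y)) {c : ℝ} {x y : V}
    (hx : x ∈ W) (hy : y ∈ W) (hTy : T y ∈ W) (hTTy : T (T y) = -(c • y)) :
    n (n (h x y)) = -(c • h x y) := by
  rw [← hnab x hx y hy, ← hnab x hx (T y) hTy, hTTy, map_neg, map_smul]

lemma Real.cos_sq_ne_one_of_mem_Ioo {θ : ℝ} (hθ : θ ∈ Set.Ioo 0 Real.pi) :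
    Real.cos θ ^ 2 ≠ 1 := by
  have := Real.sin_pos_of_pos_of_lt_pi hθ.1 hθ.2
  rw [Real.cos_sq']
  nlinarith

theorem mixed_totally_geodesic_of_nablaN_zero_general
    {V : Type*} [NormedAddCommGroup V] [InnerProductSpace ℝ V]
    (J : V →ₗ[ℝ] V)
    (hJinner : ∀ x y : V, ⟪J x, J y⟫ = ⟪x, y⟫)
    (hJsq : ∀ x : V, J (J x) = -x)
    (W : Submodule ℝ V)
    (T N : V →ₗ[ℝ] V)
    (hT : ∀ x ∈ W, T x ∈ W)
    (hN : ∀ x ∈ W, N x ∈ Wᗮ)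
    (hTN : ∀ x ∈ W, J x = T x + N x)
    (k : ℕ)
    (D : Fin (k+1) → Submodule ℝ V)
    (hDW : ∀ i, D i ≤ W)
    (hinv : ∀ x ∈ D 0, J x ∈ D 0)
    (hTD : ∀ i : Fin (k+1), i ≠ 0 → ∀ x ∈ D i, T x ∈ D i)
    (θ : Fin (k+1) → ℝ)
    (hθ : ∀ i : Fin (k+1), i ≠ 0 → θ i ∈ Set.Ioc 0 (Real.pi / 2))
    (hslant : ∀ i : Fin (k+1), i ≠ 0 → ∀ x ∈ D i, ‖T x‖ = Real.cos (θ i) * ‖x‖)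
    (n : V →ₗ[ℝ] V)
    (h : V →ₗ[ℝ] V →ₗ[ℝ] V)
    (hhsymm : ∀ x ∈ W, ∀ y ∈ W, h x y = h y x)
    (hnab : ∀ x ∈ W, ∀ y ∈ W, h x (T y) = n (h x y)) :
    ∀ i : Fin (k+1), i ≠ 0 → ∀ x ∈ D 0, ∀ y ∈ D i, h x y = 0 := by
  intro i hi x hx y hy
  have hxW : x ∈ W := hDW 0 hx
  have hyW : y ∈ W := hDW i hy
  have hTJ : ∀ z ∈ D 0, T z = J z := fun z hz ↦
    tangential_eq_of_map_mem hN hTN hT (hDW 0 hz) (hDW 0 (hinv z hz))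
  have hTTx : T (T x) = -((1 : ℝ) • x) := by
    rw [hTJ x hx, hTJ _ (hinv x hx), hJsq, one_smul]
  have hTTy : T (T y) = -(Real.cos (θ i) ^ 2 • y) :=
    apply_apply_eq_neg_sq_smul (hTD i hi)
      (fun a ha b hb ↦ inner_tangential_eq_neg_inner_tangential hN hTN hJinner hJsq
        (hDW i ha) (hDW i hb))
      (hslant i hi) hy
  have hD0 := n_n_h_eq_neg_smul_of_T_T_eq_neg_smul hnab hyW hxW (hT x hxW) hTTx
  have hDi := n_n_h_eq_neg_smul_of_T_T_eq_neg_smul hnab hxW hyW (hDW i (hTD i hi y hy)) hTTy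
  rw [← hhsymm x hxW y hyW, one_smul, hDi, neg_inj] at hD0
  have hcos : Real.cos (θ i) ^ 2 ≠ 1 :=
    Real.cos_sq_ne_one_of_mem_Ioo ⟨(hθ i hi).1, by linarith [(hθ i hi).2, Real.pi_pos]⟩
  have hzero : (Real.cos (θ i) ^ 2 - 1) • h x y = 0 := by rw [sub_smul, one_smul, hD0, sub_self]
  exact (smul_eq_zero.mp hzero).resolve_left (sub_ne_zero.mpr hcos)

/-- Theorem 3.6 (i), fiberwise: if `h(x, Ty) = n h(x, y)` on `W` (the fiberwise form of
∇N = 0), then `h(x, y) = 0` for `x ∈ D₀`, `y ∈ Dᵢ`, `i ∈ {1,…,k}`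
(mixed total geodesicity). -/
theorem mixed_totally_geodesic_of_nablaN_zero
    {V : Type*} [NormedAddCommGroup V] [InnerProductSpace ℝ V] [FiniteDimensional ℝ V]
    (J : V →ₗ[ℝ] V)
    (hJinner : ∀ x y : V, ⟪J x, J y⟫ = ⟪x, y⟫)
    (hJsq : ∀ x : V, J (J x) = -x)
    (W : Submodule ℝ V)
    (T N : V →ₗ[ℝ] V)
    (hT : ∀ x ∈ W, T x ∈ W)
    (hN : ∀ x ∈ W, N x ∈ Wᗮ)
    (hTN : ∀ x ∈ W, J x = T x + N x)
    (k : ℕ)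
    (D : Fin (k+1) → Submodule ℝ V)
    (hDW : ∀ i, D i ≤ W)
    (hDorth : ∀ i j, i ≠ j → ∀ x ∈ D i, ∀ y ∈ D j, ⟪x, y⟫ = 0)
    (hinv : ∀ x ∈ D 0, J x ∈ D 0)
    (hTD : ∀ i : Fin (k+1), i ≠ 0 → ∀ x ∈ D i, T x ∈ D i)
    (θ : Fin (k+1) → ℝ)
    (hθ0 : θ 0 = 0)
    (hθ : ∀ i : Fin (k+1), i ≠ 0 → θ i ∈ Set.Ioc 0 (Real.pi / 2))
    (hslant : ∀ i : Fin (k+1), i ≠ 0 → ∀ x ∈ D i, ‖T x‖ = Real.cos (θ i) * ‖x‖)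
    (P : Fin (k+1) → V →ₗ[ℝ] V)
    (hPmem : ∀ i x, P i x ∈ D i)
    (hPorth : ∀ i x, ∀ y ∈ D i, ⟪x - P i x, y⟫ = 0)
    (hPsum : ∀ x ∈ W, x = ∑ i, P i x)
    (t n : V →ₗ[ℝ] V)
    (ht : ∀ v ∈ Wᗮ, t v ∈ W)
    (hn : ∀ v ∈ Wᗮ, n v ∈ Wᗮ)
    (htn : ∀ v ∈ Wᗮ, J v = t v + n v)
    (h : V →ₗ[ℝ] V →ₗ[ℝ] V)
    (hhmem : ∀ x ∈ W, ∀ y ∈ W, h x y ∈ Wᗮ)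
    (hhsymm : ∀ x ∈ W, ∀ y ∈ W, h x y = h y x)
    (hnab : ∀ x ∈ W, ∀ y ∈ W, h x (T y) = n (h x y)) :
    ∀ i : Fin (k+1), i ≠ 0 → ∀ x ∈ D 0, ∀ y ∈ D i, h x y = 0 :=
  mixed_totally_geodesic_of_nablaN_zero_general J hJinner hJsq W T N hT hN hTN k D hDW hinv hTD θ hθ
    hslant n h hhsymm hnab
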